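/- Let H be a real Hilbert space, f, g : H → ℝ ∪ {+∞} proper, lower semicontinuous, convex with dom g ⊆ dom f, f Fréchet differentiable on an open set containing dom g. Let (x^k) ⊂ dom g and (β_k) ⊂ (0,1] satisfy, for all k, x^{k+1} = x^k − β_k(x^k − J_k) with J_k := prox_g(x^k − ∇f(x^k)), together with the linesearch inequality (f+g)(x^{k+1}) ≤ (f+g)(x^k) − β_k[g(x^k) − g(J_k)] − β_k⟨∇f(x^k), x^k − J_k⟩ + (β_k/2)‖x^k − J_k‖². Suppose the set S* of minimizers of f+g is nonempty and β_k ≥ β > 0 for all k. Then for every k ≥ 1: (f+g)(x^k) − min_{x∈H}(f+g)(x) ≤ (1/(2β))·(dist(x⁰, S*)² + 2[(f+g)(x⁰) − min_{x∈H}(f+g)(x)])/k. If moreover H is finite-dimensional, then lim_{k→∞} k·[(f+g)(x^k) − min_{x∈H}(f+g)(x)] = 0. -/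

import Mathlib

open Set Filter Topology Bornology RealInnerProductSpace

noncomputable section

variable {H : Type*} [NormedAddCommGroup H] [InnerProductSpace ℝ H] [CompleteSpace H]

/-- The effective domain of an extended-real-valued function. -/
def edom (h : H → EReal) : Set H := {x | h x < ⊤}

/-- `h` is a proper, lower semicontinuous, convex extended-real-valued function. -/
def ProperLscConvex (h : H → EReal) : Prop :=
  (∃ x, h x < ⊤) ∧ (∀ x, ⊥ < h x) ∧ LowerSemicontinuous h ∧
    ∀ x y : H, ∀ a b : ℝ, 0 ≤ a → 0 ≤ b → a + b = 1 →
      h (a • x + b • y) ≤ (a : EReal) * h x + (b : EReal) * h y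

/-- `p` is the proximal point `prox_{αg}(z)`, i.e. a minimizer of
`y ↦ g(y) + (1/(2α))‖y - z‖²` (such a minimizer is automatically unique). -/
def IsProxPt (g : H → EReal) (α : ℝ) (z p : H) : Prop :=
  ∀ y : H, g p + (((1 / (2 * α)) * ‖p - z‖ ^ 2 : ℝ) : EReal)
    ≤ g y + (((1 / (2 * α)) * ‖y - z‖ ^ 2 : ℝ) : EReal)

/-- `f` is Fréchet differentiable, with gradient `f'`, on an open set containing `s`
(in particular `f` is finite there). -/
def GradOnOpenSupset (f : H → EReal) (f' : H → H) (s : Set H) : Prop :=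
  ∃ U : Set H, IsOpen U ∧ s ⊆ U ∧
    ∀ x ∈ U, f x ≠ ⊤ ∧ HasGradientAt (fun y => (f y).toReal) (f' x) x

/-- Second half of Assumption A2: `f'` is uniformly continuous on bounded subsets of
`dom g` and maps bounded subsets of `dom g` to bounded sets. -/
def UCBddOnBounded (g : H → EReal) (f' : H → H) : Prop :=
  ∀ A : Set H, A ⊆ edom g → IsBounded A →
    UniformContinuousOn f' A ∧ IsBounded (f' '' A)

/-- The Linesearch-1 acceptance inequality at the point `x` with stepsize `α`. -/
def LS1 (f' : H → H) (J : H → ℝ → H) (δ : ℝ) (x : H) (α : ℝ) : Prop :=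
  α * ‖f' (J x α) - f' x‖ ≤ δ * ‖J x α - x‖

/-- `α` is the output of Linesearch 1 at `x`: the largest element of
`{σ, σθ, σθ², …}` satisfying the acceptance inequality. -/
def LS1Step (f' : H → H) (J : H → ℝ → H) (δ σ θ : ℝ) (x : H) (α : ℝ) : Prop :=
  ∃ n : ℕ, α = σ * θ ^ n ∧ LS1 f' J δ x α ∧
    ∀ m : ℕ, m < n → ¬ LS1 f' J δ x (σ * θ ^ m)

/-- The set of minimizers `S⁎` of `f + g` over `H`. -/
def argminSet (f g : H → EReal) : Set H := {x | ∀ y, f x + g x ≤ f y + g y}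

/-- The Linesearch-2 acceptance inequality at `x` (with `Jx = prox_g(x - ∇f(x))`)
with stepsize `β`. -/
def LS2Ineq (f g : H → EReal) (f' : H → H) (x Jx : H) (β : ℝ) : Prop :=
  f (x - β • (x - Jx)) + g (x - β • (x - Jx)) ≤
    f x + g x - (β : EReal) * (g x - g Jx)
      - ((β * ⟪f' x, x - Jx⟫ : ℝ) : EReal) + (((β / 2) * ‖x - Jx‖ ^ 2 : ℝ) : EReal)

/-- `v` belongs to the convex subdifferential `∂h(y)`. -/
def InSubdiff (h : H → EReal) (y v : H) : Prop :=
  ∀ z : H, ((⟪v, z - y⟫ : ℝ) : EReal) ≤ h z - h y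

/-- `h` is strongly convex with modulus `μ`. -/
def StrongConvexWith (h : H → EReal) (μ : ℝ) : Prop :=
  ∀ x y v : H, InSubdiff h y v →
    h y + ((⟪v, x - y⟫ : ℝ) : EReal) + (((μ / 2) * ‖x - y‖ ^ 2 : ℝ) : EReal) ≤ h x

lemma pos_le_of_forall (a c : ℝ) (hc : 0 ≤ c) (h : ∀ t : ℝ, 0 < t → t ≤ 1 → 0 ≤ a + t * c) : 0 ≤ a := by
  by_contra hlt
  push_neg at hlt
  have ht0 : 0 < min 1 (-a / (c + 1)) := lt_min one_pos (div_pos (by linarith) (by linarith))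
  have := h _ ht0 (min_le_left _ _)
  have h2 : min 1 (-a / (c+1)) * c ≤ (-a/(c+1)) * c := by
    apply mul_le_mul_of_nonneg_right (min_le_right _ _) hc
  have h3 : (-a/(c+1)) * c < -a := by
    rw [div_mul_eq_mul_div, div_lt_iff₀ (by linarith)]
    nlinarith
  linarith

lemma prox_vi (g : H → EReal) (hg : ProperLscConvex g) (z J y : H) (gJ gy : ℝ)
    (hJ : g J = (gJ : EReal)) (hy : g y = (gy : EReal))
    (hprox : IsProxPt g 1 z J) :
    ⟪z - J, y - J⟫ ≤ gy - gJ := by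
  have key : ∀ t : ℝ, 0 < t → t ≤ 1 →
      0 ≤ ((gy - gJ) + ⟪J - z, y - J⟫) + t * (‖y - J‖^2 / 2) := by
    intro t ht ht1
    have hcomb := hg.2.2.2 J y (1 - t) t (by linarith) ht.le (by ring)
    rw [hJ, hy] at hcomb
    have hwle : g ((1-t) • J + t • y) ≤ (((1-t)*gJ + t*gy : ℝ) : EReal) := by
      refine hcomb.trans_eq ?_
      push_cast
      ring
    have hp := hprox ((1-t) • J + t • y)
    rw [hJ] at hp
    have hchain : ((gJ + (1/(2*1)) * ‖J - z‖^2 : ℝ) : EReal)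
        ≤ (((1-t)*gJ + t*gy + (1/(2*1)) * ‖(1-t) • J + t • y - z‖^2 : ℝ) : EReal) := by
      calc ((gJ + (1/(2*1)) * ‖J - z‖^2 : ℝ) : EReal)
          = (gJ : EReal) + (((1/(2*1)) * ‖J - z‖^2 : ℝ) : EReal) := by push_cast; ring_nf
        _ ≤ g ((1-t) • J + t • y) + (((1/(2*1)) * ‖(1-t) • J + t • y - z‖^2 : ℝ) : EReal) := hp
        _ ≤ (((1-t)*gJ + t*gy : ℝ) : EReal) + (((1/(2*1)) * ‖(1-t) • J + t • y - z‖^2 : ℝ) : EReal) := by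
            exact add_le_add hwle le_rfl
        _ = _ := by push_cast; ring_nf
    have hr : gJ + (1/(2*1)) * ‖J - z‖^2
        ≤ (1-t)*gJ + t*gy + (1/(2*1)) * ‖(1-t) • J + t • y - z‖^2 :=
      EReal.coe_le_coe_iff.mp hchain
    have hwz : (1-t) • J + t • y - z = (J - z) + t • (y - J) := by
      module
    rw [hwz] at hr
    have hnorm : ‖(J - z) + t • (y - J)‖^2
        = ‖J - z‖^2 + 2 * (t * ⟪J - z, y - J⟫) + t^2 * ‖y - J‖^2 := by
      rw [@norm_add_sq_real, real_inner_smul_right, norm_smul, Real.norm_eq_abs,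
        abs_of_pos ht]
      ring
    rw [hnorm] at hr
    nlinarith [hr]
  have h0 : 0 ≤ (gy - gJ) + ⟪J - z, y - J⟫ :=
    pos_le_of_forall _ _ (by positivity) key
  have : ⟪z - J, y - J⟫ = - ⟪J - z, y - J⟫ := by
    rw [show z - J = -(J - z) by abel, inner_neg_left]
  linarith [h0, this.le, this.ge]

lemma grad_ineq (f : H → EReal) (hf : ProperLscConvex f) (x y grad : H) (fx fy : ℝ)
    (hx : f x = (fx : EReal)) (hy : f y = (fy : EReal))
    (hgrad : HasGradientAt (fun z => (f z).toReal) grad x) :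
    fx + ⟪grad, y - x⟫ ≤ fy := by
  set v := y - x with hv
  set ψ : ℝ → ℝ := fun t => (f (x + t • v)).toReal with hψ
  have hψ0 : ψ 0 = fx := by simp [hψ, hx]
  have hline : HasDerivAt (fun t : ℝ => x + t • v) v 0 := by
    simpa using ((hasDerivAt_id (0:ℝ)).smul_const v).const_add x
  have hFD : HasFDerivAt (fun z => (f z).toReal) (InnerProductSpace.toDual ℝ H grad) x :=
    hgrad
  have hder : HasDerivAt ψ ⟪grad, v⟫ 0 := by
    have := HasFDerivAt.comp_hasDerivAt (0:ℝ) (by simpa using hFD) hline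
    simp only [Function.comp_def] at this
    exact this
  have hslope : Tendsto (slope ψ 0) (𝓝[>] (0:ℝ)) (𝓝 ⟪grad, v⟫) :=
    (hasDerivAt_iff_tendsto_slope.mp hder).mono_left
      (nhdsWithin_mono _ (fun t ht => ne_of_gt ht))
  have hioc : Ioc (0:ℝ) 1 ∈ 𝓝[>] (0:ℝ) :=
    Filter.inter_mem self_mem_nhdsWithin
      (mem_nhdsWithin_of_mem_nhds (Iic_mem_nhds zero_lt_one))
  have hbound : ∀ᶠ t in 𝓝[>] (0:ℝ), slope ψ 0 t ≤ fy - fx := by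
    filter_upwards [hioc] with t ht
    obtain ⟨ht0, ht1⟩ := ht
    have hcomb := hf.2.2.2 x y (1 - t) t (by linarith) ht0.le (by ring)
    rw [hx, hy] at hcomb
    have hxtv : (1 - t) • x + t • y = x + t • v := by
      rw [hv]; module
    rw [hxtv] at hcomb
    have hcomb2 : f (x + t • v) ≤ (((1-t)*fx + t*fy : ℝ) : EReal) := by
      refine hcomb.trans_eq ?_
      push_cast; ring_nf
    have hψt : ψ t ≤ (1-t)*fx + t*fy := by
      have := EReal.toReal_le_toReal hcomb2 (hf.2.1 _).ne' (EReal.coe_ne_top _)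
      rw [EReal.toReal_coe] at this
      exact this
    rw [slope_def_field, hψ0, sub_zero, div_le_iff₀ ht0]
    nlinarith [hψt]
  have hfin : ⟪grad, v⟫ ≤ fy - fx := le_of_tendsto hslope hbound
  linarith

lemma nat_mul_tendsto_zero (a : ℕ → ℝ) (M : ℝ) (hpos : ∀ k, 0 ≤ a k)
    (hmono : ∀ k, a (k+1) ≤ a k)
    (hsum : ∀ n, ∑ k ∈ Finset.range n, a k ≤ M) :
    Tendsto (fun n : ℕ => (n : ℝ) * a n) atTop (𝓝 0) := by
  set s : ℕ → ℝ := fun n => ∑ k ∈ Finset.range n, a k with hs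
  have hsmono : Monotone s := by
    apply monotone_nat_of_le_succ
    intro n
    simp only [hs, Finset.sum_range_succ]
    linarith [hpos n]
  have hbdd : BddAbove (Set.range s) := ⟨M, by rintro _ ⟨n, rfl⟩; exact hsum n⟩
  set L : ℝ := ⨆ n, s n with hLdef
  have hL : Tendsto s atTop (𝓝 L) := tendsto_atTop_ciSup hsmono hbdd
  have haanti : Antitone a := antitone_nat_of_succ_le hmono
  rw [Metric.tendsto_atTop]
  intro ε hε
  rw [Metric.tendsto_atTop] at hL
  obtain ⟨N, hN⟩ := hL (ε/4) (by linarith)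
  refine ⟨2*N + 1, fun n hn => ?_⟩
  have hNn : N ≤ n := by omega
  have hsNL : s N ≤ L := le_ciSup hbdd N
  have hsnL : s n ≤ L := le_ciSup hbdd n
  have hdist := hN N le_rfl
  rw [Real.dist_eq, abs_lt] at hdist
  have h1 : ((n - N : ℕ) : ℝ) * a n ≤ s n - s N := by
    have hcard := Finset.card_nsmul_le_sum (Finset.Ico N n) a (a n)
      (fun i hi => haanti (Finset.mem_Ico.mp hi).2.le)
    rw [Nat.card_Ico, nsmul_eq_mul] at hcard
    have := Finset.sum_Ico_eq_sub a hNn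
    rw [this] at hcard
    exact hcard
  have h2 : s n - s N < ε/4 := by linarith
  have hcast : ((n - N : ℕ) : ℝ) = (n : ℝ) - N := by
    rw [Nat.cast_sub hNn]
  have h3 : (n : ℝ) ≤ 2 * ((n:ℝ) - N) := by
    have : (2*N + 1 : ℕ) ≤ n := hn
    have : (2*(N:ℝ) + 1) ≤ n := by exact_mod_cast this
    linarith
  have h4 : (n : ℝ) * a n ≤ 2 * (((n:ℝ) - N) * a n) := by
    nlinarith [hpos n]
  rw [Real.dist_eq, sub_zero, abs_of_nonneg (mul_nonneg (Nat.cast_nonneg n) (hpos n))]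
  rw [hcast] at h1
  linarith

/-- Theorem 5.2: complexity of Method 3. If `S⁎ ≠ ∅` and the stepsizes
satisfy `βₖ ≥ β > 0`, then for every `k ≥ 1`,
`(f+g)(xᵏ) − min(f+g) ≤ (1/(2β))(dist(x⁰,S⁎)² + 2[(f+g)(x⁰) − min(f+g)])/k`;
if moreover `H` is finite-dimensional, `k[(f+g)(xᵏ) − min(f+g)] → 0`. -/
theorem stmt19
    (f g : H → EReal) (f' : H → H)
    (hf : ProperLscConvex f) (hg : ProperLscConvex g)
    (hdom : edom g ⊆ edom f)
    (hdiff : GradOnOpenSupset f f' (edom g))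
    (x Jseq : ℕ → H) (b : ℕ → ℝ)
    (hxdom : ∀ k : ℕ, x k ∈ edom g)
    (hb : ∀ k : ℕ, b k ∈ Set.Ioc (0 : ℝ) 1)
    (hJ : ∀ k : ℕ, IsProxPt g 1 (x k - f' (x k)) (Jseq k))
    (hiter : ∀ k : ℕ, x (k + 1) = x k - b k • (x k - Jseq k))
    (hls : ∀ k : ℕ, LS2Ineq f g f' (x k) (Jseq k) (b k))
    (hS : (argminSet f g).Nonempty)
    (β : ℝ) (hβ : 0 < β) (hbk : ∀ k : ℕ, β ≤ b k) :
    (∀ k : ℕ, 1 ≤ k →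
      (f (x k) + g (x k)) - (⨅ z, f z + g z)
        ≤ (((1 / (2 * β)) * ((Metric.infDist (x 0) (argminSet f g)) ^ 2
              + 2 * ((f (x 0) + g (x 0)) - (⨅ z, f z + g z)).toReal) / k : ℝ) : EReal)) ∧
    (FiniteDimensional ℝ H →
      Tendsto (fun k : ℕ => (k : EReal) * ((f (x k) + g (x k)) - ⨅ z, f z + g z))
        atTop (nhds 0)) := by
  obtain ⟨xs, hxs⟩ := hS
  obtain ⟨U, hUopen, hUsub, hUdiff⟩ := hdiff
  set fr : H → ℝ := fun z => (f z).toReal with hfrdef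
  set gr : H → ℝ := fun z => (g z).toReal with hgrdef
  have hgne : ∀ z, g z ≠ ⊥ := fun z => (hg.2.1 z).ne'
  have hfne : ∀ z, f z ≠ ⊥ := fun z => (hf.2.1 z).ne'
  have hgco : ∀ z ∈ edom g, g z = ((gr z : ℝ) : EReal) :=
    fun z hz => (EReal.coe_toReal (show g z < ⊤ from hz).ne (hgne z)).symm
  have hfco : ∀ z ∈ edom g, f z = ((fr z : ℝ) : EReal) :=
    fun z hz => (EReal.coe_toReal (show f z < ⊤ from hdom hz).ne (hfne z)).symm
  have hFx0 : f (x 0) + g (x 0) = ((fr (x 0) + gr (x 0) : ℝ) : EReal) := by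
    rw [hfco _ (hxdom 0), hgco _ (hxdom 0)]; norm_cast
  -- any minimizer is in edom g
  have hSdom : ∀ ys ∈ argminSet f g, ys ∈ edom g := by
    intro ys hys
    by_contra hns
    have hgt : g ys = ⊤ := top_le_iff.mp (not_lt.mp hns)
    have h1 := hys (x 0)
    rw [hgt, hFx0] at h1
    rw [EReal.add_top_of_ne_bot (hfne ys)] at h1
    exact absurd h1 (not_le.mpr (EReal.coe_lt_top _))
  have hxsdom : xs ∈ edom g := hSdom xs hxs
  have hFxs : f xs + g xs = ((fr xs + gr xs : ℝ) : EReal) := by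
    rw [hfco _ hxsdom, hgco _ hxsdom]; norm_cast
  have hFeq : ∀ ys ∈ argminSet f g, fr ys + gr ys = fr xs + gr xs := by
    intro ys hys
    have h1 := hys xs
    have h2 := hxs ys
    have hFys : f ys + g ys = ((fr ys + gr ys : ℝ) : EReal) := by
      rw [hfco _ (hSdom ys hys), hgco _ (hSdom ys hys)]; norm_cast
    rw [hFys, hFxs] at h1 h2
    have h1' : fr ys + gr ys ≤ fr xs + gr xs := by exact_mod_cast h1
    have h2' : fr xs + gr xs ≤ fr ys + gr ys := by exact_mod_cast h2
    linarith
  have hmeq : (⨅ z, f z + g z) = ((fr xs + gr xs : ℝ) : EReal) := by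
    refine le_antisymm (hFxs ▸ iInf_le _ xs) (le_iInf fun z => hFxs ▸ hxs z)
  have hJdom : ∀ k, Jseq k ∈ edom g := by
    intro k
    by_contra hns
    have hgt : g (Jseq k) = ⊤ := top_le_iff.mp (not_lt.mp hns)
    have h1 := hJ k (x k)
    rw [hgt, hgco _ (hxdom k)] at h1
    rw [EReal.top_add_of_ne_bot (EReal.coe_ne_bot _)] at h1
    have : ((gr (x k) : ℝ) : EReal) + (((1 / (2 * 1)) * ‖x k - (x k - f' (x k))‖ ^ 2 : ℝ) : EReal)
        = ((gr (x k) + (1 / (2 * 1)) * ‖x k - (x k - f' (x k))‖ ^ 2 : ℝ) : EReal) := by norm_cast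
    rw [this] at h1
    exact absurd h1 (not_le.mpr (EReal.coe_lt_top _))
  have hgrad : ∀ z ∈ edom g, HasGradientAt (fun y => (f y).toReal) (f' z) z :=
    fun z hz => (hUdiff z (hUsub hz)).2
  -- real LS2
  have hlsr : ∀ k, fr (x (k+1)) + gr (x (k+1)) ≤ fr (x k) + gr (x k)
      - b k * (gr (x k) - gr (Jseq k)) - b k * ⟪f' (x k), x k - Jseq k⟫
      + (b k / 2) * ‖x k - Jseq k‖^2 := by
    intro k
    have h := hls k
    unfold LS2Ineq at h
    rw [← hiter k, hfco _ (hxdom (k+1)), hgco _ (hxdom (k+1)), hfco _ (hxdom k),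
      hgco _ (hxdom k), hgco _ (hJdom k)] at h
    exact_mod_cast h
  have hvi : ∀ k, ∀ y ∈ edom g,
      ⟪(x k - f' (x k)) - Jseq k, y - Jseq k⟫ ≤ gr y - gr (Jseq k) :=
    fun k y hy => prox_vi g hg _ _ _ _ _ (hgco _ (hJdom k)) (hgco _ hy) (hJ k)
  have hgi : ∀ k, ∀ y ∈ edom g, fr (x k) + ⟪f' (x k), y - x k⟫ ≤ fr y :=
    fun k y hy => grad_ineq f hf (x k) y (f' (x k)) _ _
      (hfco _ (hxdom k)) (hfco _ hy) (hgrad _ (hxdom k))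
  set a : ℕ → ℝ := fun k => (fr (x k) + gr (x k)) - (fr xs + gr xs) with hadef
  have hanneg : ∀ k, 0 ≤ a k := by
    intro k
    have h := hxs (x k)
    rw [hFxs, hfco _ (hxdom k), hgco _ (hxdom k)] at h
    have h' : fr xs + gr xs ≤ fr (x k) + gr (x k) := by exact_mod_cast h
    simp only [hadef]
    linarith
  have hn2 : ∀ k, (0:ℝ) ≤ ‖x k - Jseq k‖^2 := fun k => sq_nonneg _
  -- inner product expansion at x k
  have hexpx : ∀ k, ⟪(x k - f' (x k)) - Jseq k, x k - Jseq k⟫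
      = ‖x k - Jseq k‖^2 - ⟪f' (x k), x k - Jseq k⟫ := by
    intro k
    rw [show (x k - f' (x k)) - Jseq k = (x k - Jseq k) - f' (x k) by abel,
      inner_sub_left, real_inner_self_eq_norm_sq]
  -- monotone decrease
  have hamono : ∀ k, a (k+1) ≤ a k := by
    intro k
    have h1 := hlsr k
    have h2 := hvi k (x k) (hxdom k)
    rw [hexpx k] at h2
    have h2' := mul_le_mul_of_nonneg_left h2 (hb k).1.le
    simp only [hadef]
    nlinarith [mul_nonneg (hb k).1.le (hn2 k)]
  -- Fejer-type step
  have hstepB : ∀ k, ∀ ys ∈ argminSet f g,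
      ‖x (k+1) - ys‖^2 + 2 * a (k+1) ≤ ‖x k - ys‖^2 + 2 * a k - 2 * b k * a k := by
    intro k ys hys
    have hysdom := hSdom ys hys
    have h1 := hlsr k
    have hviy := hvi k ys hysdom
    have hgiy := hgi k ys hysdom
    set P : ℝ := ⟪f' (x k), x k - Jseq k⟫ with hP
    set B : ℝ := ⟪f' (x k), ys - x k⟫ with hB
    set C : ℝ := ⟪x k - ys, x k - Jseq k⟫ with hC
    have e2 : ⟪(x k - f' (x k)) - Jseq k, ys - Jseq k⟫
        = -C + ‖x k - Jseq k‖^2 - B - P := by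
      have harg1 : (x k - f' (x k)) - Jseq k = (x k - Jseq k) - f' (x k) := by abel
      have harg2 : ys - Jseq k = (ys - x k) + (x k - Jseq k) := by abel
      rw [harg1, harg2, inner_sub_left, inner_add_right, inner_add_right,
        real_inner_self_eq_norm_sq]
      have h3 : ⟪x k - Jseq k, ys - x k⟫ = -C := by
        rw [show ys - x k = -(x k - ys) by abel, inner_neg_right, hC, real_inner_comm]
      rw [h3, hP, hB]
      ring
    rw [e2] at hviy
    have hD : ‖x (k+1) - ys‖^2
        = ‖x k - ys‖^2 - 2 * b k * C + (b k)^2 * ‖x k - Jseq k‖^2 := by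
      rw [hiter k, show x k - b k • (x k - Jseq k) - ys
        = (x k - ys) - b k • (x k - Jseq k) by abel]
      rw [@norm_sub_sq_real, real_inner_smul_right, norm_smul, Real.norm_eq_abs,
        abs_of_pos (hb k).1, mul_pow, hC]
      ring
    have hv' := mul_le_mul_of_nonneg_left hviy (hb k).1.le
    have hg' := mul_le_mul_of_nonneg_left hgiy (hb k).1.le
    have hq : 0 ≤ b k * (1 - b k) * ‖x k - Jseq k‖^2 :=
      mul_nonneg (mul_nonneg (hb k).1.le (by linarith [(hb k).2])) (hn2 k)
    have hFy := hFeq ys hys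
    have hFy' : b k * (fr ys + gr ys) = b k * (fr xs + gr xs) := by rw [hFy]
    simp only [hadef]
    rw [hD]
    nlinarith [hv', hg', h1, hq, hFy']
  -- telescoping
  have hsum : ∀ ys ∈ argminSet f g, ∀ n : ℕ,
      ‖x n - ys‖^2 + 2 * a n + 2 * β * ∑ k ∈ Finset.range n, a k
        ≤ ‖x 0 - ys‖^2 + 2 * a 0 := by
    intro ys hys n
    induction n with
    | zero => simp
    | succ n ih =>
      have hB := hstepB n ys hys
      have hba : 2 * β * a n ≤ 2 * b n * a n := by
        apply mul_le_mul_of_nonneg_right _ (hanneg n)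
        linarith [hbk n]
      rw [Finset.sum_range_succ]
      linarith
  have hkan : ∀ ys ∈ argminSet f g, ∀ k : ℕ,
      2 * β * ((k:ℝ) * a k) ≤ ‖x 0 - ys‖^2 + 2 * a 0 := by
    intro ys hys k
    have h1 := hsum ys hys k
    have h2 : (k:ℝ) * a k ≤ ∑ j ∈ Finset.range k, a j := by
      have h3 := Finset.card_nsmul_le_sum (Finset.range k) a (a k)
        (fun i hi => antitone_nat_of_succ_le hamono (Finset.mem_range.mp hi).le)
      rwa [Finset.card_range, nsmul_eq_mul] at h3
    nlinarith [h2, sq_nonneg ‖x k - ys‖, hanneg k, hβ]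
  have hdistb : ∀ k : ℕ, 2 * β * ((k:ℝ) * a k)
      ≤ (Metric.infDist (x 0) (argminSet f g))^2 + 2 * a 0 := by
    intro k
    set d := Metric.infDist (x 0) (argminSet f g) with hd
    have hdnn : 0 ≤ d := Metric.infDist_nonneg
    have hεb : ∀ ε > (0:ℝ), 2 * β * ((k:ℝ) * a k) ≤ (d + ε)^2 + 2 * a 0 := by
      intro ε hε
      obtain ⟨ys, hys, hlt⟩ := (Metric.infDist_lt_iff ⟨xs, hxs⟩).mp
        (show d < d + ε by linarith)
      have hn : ‖x 0 - ys‖ < d + ε := by rwa [dist_eq_norm] at hlt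
      have hsq : ‖x 0 - ys‖^2 ≤ (d + ε)^2 :=
        pow_le_pow_left₀ (norm_nonneg _) hn.le 2
      linarith [hkan ys hys k]
    have hT : Tendsto (fun ε : ℝ => (d + ε)^2 + 2 * a 0) (𝓝[>] 0)
        (𝓝 (d^2 + 2 * a 0)) := by
      have h5 : Tendsto (fun ε : ℝ => (d + ε)^2 + 2 * a 0) (𝓝 0)
          (𝓝 ((d + 0)^2 + 2 * a 0)) :=
        (((tendsto_const_nhds.add tendsto_id).pow 2).add tendsto_const_nhds)
      simpa using h5.mono_left nhdsWithin_le_nhds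
    exact ge_of_tendsto hT
      (by filter_upwards [self_mem_nhdsWithin] with ε hε' using hεb ε hε')
  constructor
  · intro k hk
    have hk0 : (0:ℝ) < (k:ℝ) := by exact_mod_cast hk
    rw [hfco _ (hxdom k), hgco _ (hxdom k), hmeq, hFx0]
    rw [show (((fr (x 0) + gr (x 0) : ℝ) : EReal) - ((fr xs + gr xs : ℝ) : EReal)).toReal
        = a 0 by rw [← EReal.coe_sub, EReal.toReal_coe]]
    have hreal : a k ≤ 1 / (2 * β) * ((Metric.infDist (x 0) (argminSet f g)) ^ 2
        + 2 * a 0) / (k:ℝ) := by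
      have h := hdistb k
      have he : 1 / (2 * β) * ((Metric.infDist (x 0) (argminSet f g)) ^ 2 + 2 * a 0)
          = ((Metric.infDist (x 0) (argminSet f g)) ^ 2 + 2 * a 0) / (2 * β) := by ring
      rw [he, div_div, le_div_iff₀ (by positivity)]
      nlinarith [h]
    simp only [hadef] at hreal ⊢
    exact_mod_cast hreal
  · intro _
    have hco : ∀ k : ℕ, (k : EReal) * ((f (x k) + g (x k)) - ⨅ z, f z + g z)
        = (((k : ℝ) * a k : ℝ) : EReal) := by
      intro k
      rw [hfco _ (hxdom k), hgco _ (hxdom k), hmeq]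
      simp only [hadef]
      norm_cast
    have hM : ∀ n : ℕ, ∑ j ∈ Finset.range n, a j ≤ (‖x 0 - xs‖^2 + 2 * a 0) / (2 * β) := by
      intro n
      have h := hsum xs hxs n
      rw [le_div_iff₀ (by positivity)]
      nlinarith [sq_nonneg ‖x n - xs‖, hanneg n]
    have hreal := nat_mul_tendsto_zero a _ hanneg hamono hM
    simp only [hco]
    have h0 : (0 : EReal) = ((0:ℝ) : EReal) := by norm_cast
    rw [h0, EReal.tendsto_coe]
    exact hreal
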